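/- Let γ ∈ (0,2), Q = γ/2 + 2/γ and μ > 0, and define R^{DOZZ}(α) = −( πμ l(γ²/4) )^{2(Q−α)/γ} · ( Γ(−γ(Q−α)/2) / Γ(γ(Q−α)/2) ) · ( Γ(−2(Q−α)/γ) / Γ(2(Q−α)/γ) ) for real α. Then for every real α such that none of the Gamma functions appearing on either side of the equation below is evaluated at a nonpositive integer, R^{DOZZ} satisfies the first shift equation R^{DOZZ}(α) = −μπ · R^{DOZZ}(α + γ/2) / ( l(−γ²/4) · l(γα/2) · l(2 + γ²/4 − γα/2) ). -/

import Mathlib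

/-!
Put `t = γ²/4`, `b = 2(Q - α)/γ` and `g(x) = Γ(-x)/Γ(x)`. Then `tb = γ(Q - α)/2`, so
`R(α) = -C^b g(tb) g(b)` with `C = πμ l(t)`, and the shift `α ↦ α + γ/2` is `b ↦ b - 1`.
Only `Γ(x + 1) = x Γ(x)` is needed: it gives `g(b - 1) = -b(b - 1) g(b)`, `l(x + 1) = -x² l(x)`
and `l(-x) = g(x)/x`, which together with `l(x) l(1 - x) = 1` express the three `l`-factors of
the denominator through `l(t)`, `g(tb - t)` and `g(tb)`. Then `C^b = C^(b-1) C` absorbs `l(t)`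
and the remaining factors cancel because `tb(tb - t) = t² b(b - 1)`.
-/

open MeasureTheory Set

/-- The special function `l(x) = Γ(x)/Γ(1-x)`. -/
noncomputable def lr (x : ℝ) : ℝ := Real.Gamma x / Real.Gamma (1 - x)

/-- The explicit reflection coefficient `R^{DOZZ}` of Liouville conformal field theory. -/
noncomputable def Rdozz (γ μ α : ℝ) : ℝ :=
  -(Real.pi * μ * lr (γ^2/4)) ^ (2*((γ/2 + 2/γ) - α)/γ)
    * (Real.Gamma (-(γ*((γ/2 + 2/γ) - α)/2)) / Real.Gamma (γ*((γ/2 + 2/γ) - α)/2))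
    * (Real.Gamma (-(2*((γ/2 + 2/γ) - α)/γ)) / Real.Gamma (2*((γ/2 + 2/γ) - α)/γ))

noncomputable def gammaRatio (x : ℝ) : ℝ := Real.Gamma (-x) / Real.Gamma x

lemma gammaRatio_ne_zero {x : ℝ} (hx : ∀ n : ℕ, x ≠ -n) (hnx : ∀ n : ℕ, -x ≠ -n) :
    gammaRatio x ≠ 0 :=
  div_ne_zero (Real.Gamma_ne_zero hnx) (Real.Gamma_ne_zero hx)

lemma gammaRatio_neg (x : ℝ) : gammaRatio (-x) = (gammaRatio x)⁻¹ := by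
  rw [gammaRatio, gammaRatio, neg_neg, inv_div]

lemma lr_ne_zero {x : ℝ} (hx : ∀ n : ℕ, x ≠ -n) (h1x : ∀ n : ℕ, 1 - x ≠ -n) : lr x ≠ 0 :=
  div_ne_zero (Real.Gamma_ne_zero hx) (Real.Gamma_ne_zero h1x)

lemma lr_one_sub (x : ℝ) : lr (1 - x) = (lr x)⁻¹ := by
  rw [lr, lr, sub_sub_cancel, inv_div]

lemma Gamma_one_sub {x : ℝ} (hx : x ≠ 0) : Real.Gamma (1 - x) = -x * Real.Gamma (-x) := by
  rw [← Real.Gamma_add_one (neg_ne_zero.mpr hx), neg_add_eq_sub]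

-- These need no hypotheses: at the poles both sides vanish, as Mathlib sets `Γ(-n) = 0`.
lemma gammaRatio_sub_one (x : ℝ) : gammaRatio (x - 1) = -(x * (x - 1)) * gammaRatio x := by
  rcases eq_or_ne x 0 with rfl | hx0
  · simpa [gammaRatio] using Real.Gamma_neg_nat_eq_zero 1
  rcases eq_or_ne x 1 with rfl | hx1
  · simp [gammaRatio]
  have h : Real.Gamma x = (x - 1) * Real.Gamma (x - 1) := by
    rw [← Real.Gamma_add_one (sub_ne_zero.mpr hx1), sub_add_cancel]
  rw [gammaRatio, gammaRatio, neg_sub, Gamma_one_sub hx0, h]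
  field_simp

lemma lr_add_one (x : ℝ) : lr (x + 1) = -(x ^ 2 * lr x) := by
  rcases eq_or_ne x 0 with rfl | hx
  · simp [lr]
  rw [lr, lr, Real.Gamma_add_one hx, show 1 - (x + 1) = -x by ring, Gamma_one_sub hx]
  field_simp

lemma lr_neg (x : ℝ) : lr (-x) = gammaRatio x / x := by
  rcases eq_or_ne x 0 with rfl | hx
  · simp [lr, gammaRatio]
  rw [lr, gammaRatio, sub_neg_eq_add, add_comm, Real.Gamma_add_one hx, div_div, mul_comm]

noncomputable def reflectionCoeff (C t b : ℝ) : ℝ :=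
  -C ^ b * gammaRatio (t * b) * gammaRatio b

theorem Rdozz_eq_reflectionCoeff {γ : ℝ} (hγ : γ ≠ 0) (μ α : ℝ) :
    Rdozz γ μ α = reflectionCoeff (Real.pi * μ * lr (γ ^ 2 / 4)) (γ ^ 2 / 4)
      (2 * ((γ / 2 + 2 / γ) - α) / γ) := by
  have h : γ * ((γ / 2 + 2 / γ) - α) / 2 = γ ^ 2 / 4 * (2 * ((γ / 2 + 2 / γ) - α) / γ) := by
    field_simp
    ring
  rw [Rdozz, reflectionCoeff, gammaRatio, gammaRatio, h]

theorem reflectionCoeff_shift {c t b : ℝ} (hc : c * lr t ≠ 0) (ht : t ≠ 0) (hb₀ : b ≠ 0)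
    (hb₁ : b ≠ 1) (hat : gammaRatio (t * b - t) ≠ 0) :
    reflectionCoeff (c * lr t) t b
      = -c * reflectionCoeff (c * lr t) t (b - 1)
          / (lr (-t) * lr (1 - (t * b - t)) * lr (1 + t * b)) := by
  have hpow : (c * lr t) ^ b = (c * lr t) ^ (b - 1) * (c * lr t) := by
    rw [← Real.rpow_add_one hc, sub_add_cancel]
  rw [show -t = 1 - (t + 1) by ring, show 1 + t * b = 1 - -(t * b) by ring,
    lr_one_sub, lr_one_sub, lr_one_sub, lr_add_one, lr_neg, ← neg_sub t, lr_neg,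
    ← neg_sub (t * b), gammaRatio_neg]
  rw [reflectionCoeff, reflectionCoeff, hpow, mul_sub_one, gammaRatio_sub_one]
  have hb₁' : b - 1 ≠ 0 := sub_ne_zero.mpr hb₁
  have : t * b - t ≠ 0 := by rw [← mul_sub_one]; exact mul_ne_zero ht hb₁'
  generalize gammaRatio (t * b - t) = g at hat ⊢
  field_simp

/-- First shift equation for the explicit reflection coefficient:
`R(α) = -μπ R(α+γ/2) / ( l(-γ²/4) l(γα/2) l(2+γ²/4-γα/2) )`. -/
theorem rdozz_first_shift (γ μ α : ℝ) (hγ : γ ∈ Set.Ioo (0:ℝ) 2) (hμ : 0 < μ)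
    (hΓ : ∀ x ∈ ([γ^2/4, 1 - γ^2/4,
        -(γ*((γ/2 + 2/γ) - α)/2), γ*((γ/2 + 2/γ) - α)/2,
        -(2*((γ/2 + 2/γ) - α)/γ), 2*((γ/2 + 2/γ) - α)/γ,
        -(γ*((γ/2 + 2/γ) - (α + γ/2))/2), γ*((γ/2 + 2/γ) - (α + γ/2))/2,
        -(2*((γ/2 + 2/γ) - (α + γ/2))/γ), 2*((γ/2 + 2/γ) - (α + γ/2))/γ,
        -γ^2/4, 1 + γ^2/4,
        γ*α/2, 1 - γ*α/2,
        2 + γ^2/4 - γ*α/2, 1 - (2 + γ^2/4 - γ*α/2)] : List ℝ),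
      ∀ n : ℕ, x ≠ -(n:ℝ)) :
    Rdozz γ μ α
      = -μ * Real.pi * Rdozz γ μ (α + γ/2)
          / (lr (-γ^2/4) * lr (γ*α/2) * lr (2 + γ^2/4 - γ*α/2)) := by
  have hγ₀ : γ ≠ 0 := hγ.1.ne'
  simp only [List.mem_cons, List.not_mem_nil, or_false, forall_eq_or_imp, forall_eq] at hΓ
  obtain ⟨ht, h1t, -, -, -, hb, ha₁, ha₂, -, hb₁, -⟩ := hΓ
  set t := γ ^ 2 / 4 with ht_def
  set b := 2 * ((γ / 2 + 2 / γ) - α) / γ with hb_def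
  have hb_shift : 2 * ((γ / 2 + 2 / γ) - (α + γ / 2)) / γ = b - 1 := by
    rw [hb_def]
    field_simp
    ring
  have ha_shift : γ * ((γ / 2 + 2 / γ) - (α + γ / 2)) / 2 = t * b - t := by
    rw [ht_def, hb_def]
    field_simp
    ring
  have hα : γ * α / 2 = 1 - (t * b - t) := by
    rw [ht_def, hb_def]
    field_simp
    ring
  rw [Rdozz_eq_reflectionCoeff hγ₀, Rdozz_eq_reflectionCoeff hγ₀, hb_shift,
    show -γ ^ 2 / 4 = -t by ring, hα,
    show 2 + t - (1 - (t * b - t)) = 1 + t * b by ring,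
    show -μ * Real.pi = -(Real.pi * μ) by ring]
  rw [hb_shift] at hb₁
  rw [ha_shift] at ha₁ ha₂
  exact reflectionCoeff_shift (mul_ne_zero (by positivity) (lr_ne_zero ht h1t)) (by positivity)
    (by simpa using hb 0 : b ≠ 0) (by simpa [sub_eq_zero] using hb₁ 0 : b ≠ 1) (gammaRatio_ne_zero ha₂ ha₁)
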